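/- For the 21-tile Wang set V defined in the paper, the set R = {v₀, v₁, v₃, v₈, v₉, v₁₄, v₁₅} is a set of markers in direction e₁: no two tiles of R are horizontally adjacent in any valid tiling (indeed even in any valid 3×3 patch), and no tile of R is vertically adjacent to a tile of V∖R. -/
import Mathlib


/-- The colors used by the Wang tile set `V`. -/
inductive VC : Type
  | A | B | E | G | I | AF | BF | CH | EH | GF | ID | IH | IJ
  | K | L | M | O | P
deriving DecidableEq

open VC

/-- Right colors of the 21 tiles of `V`. -/
def Vr : Fin 21 → VC :=
  ![A, B, E, G, I, I, I, I, AF, BF, CH, EH, EH, EH, GF, GF, ID, ID, IH, IH, IJ]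

/-- Top colors of the 21 tiles of `V`. -/
def Vt : Fin 21 → VC :=
  ![L, O, P, L, K, K, P, P, O, O, P, K, K, P, O, O, M, M, K, K, M]

/-- Left colors of the 21 tiles of `V`. -/
def Vl : Fin 21 → VC :=
  ![I, I, I, E, A, B, G, I, IH, IJ, IH, GF, ID, IJ, CH, EH, AF, BF, GF, ID, GF]

/-- Bottom colors of the 21 tiles of `V`. -/
def Vb : Fin 21 → VC :=
  ![O, O, P, O, K, M, K, K, O, O, P, P, P, P, L, O, K, M, K, K, K]

/-- A valid Wang tiling of the plane by the tile set `V`. -/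
def ValidV (x : ℤ × ℤ → Fin 21) : Prop :=
  ∀ p : ℤ × ℤ, Vr (x p) = Vl (x (p.1 + 1, p.2)) ∧
    Vt (x p) = Vb (x (p.1, p.2 + 1))

/-- The subset `R = {v₀, v₁, v₃, v₈, v₉, v₁₄, v₁₅}` of `V`. -/
def RV : Set (Fin 21) := {0, 1, 3, 8, 9, 14, 15}

lemma key1 : ∀ a b : Fin 21, Vr a = Vl b → a ∈ RV → b ∈ RV → False := by
  simp only [RV, Set.mem_insert_iff, Set.mem_singleton_iff]; decide

lemma key2 : ∀ a b : Fin 21, Vt a = Vb b → (a ∈ RV ↔ b ∈ RV) := by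
  simp only [RV, Set.mem_insert_iff, Set.mem_singleton_iff]; decide

/-- `R = {v₀, v₁, v₃, v₈, v₉, v₁₄, v₁₅}` is a set of markers of `V` in
direction `e₁`: in every valid tiling, two tiles of `R` are never horizontally
adjacent, and a tile of `R` is vertically adjacent only to tiles of `R`. -/
theorem RV_isMarkers :
    ∀ x : ℤ × ℤ → Fin 21, ValidV x → ∀ p : ℤ × ℤ,
      ¬(x p ∈ RV ∧ x (p.1 + 1, p.2) ∈ RV) ∧
      (x p ∈ RV ↔ x (p.1, p.2 + 1) ∈ RV) := by
  intro x hx p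
  obtain ⟨h1, h2⟩ := hx p
  exact ⟨fun ⟨ha, hb⟩ => key1 _ _ h1 ha hb, key2 _ _ h2⟩
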